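/- arXiv:0905.4412 — 2 statements merged into one kernel-verified Lean document; each statement's English description precedes it below -/
import Mathlib

section
/- Let T be a game tree, let A ⊆ [T], and let B ⊆ A be a Gδ subset of Baire space. If player I has no winning strategy in G(A; T), then there is a quasi-strategy T* for II in T such that (i) [T*] ∩ B = ∅, and (ii) player I has no winning strategy in G(A ∩ [T*]; T*). -/
/-- `T ⊆ List ℕ` is a game tree: nonempty, closed under prefixes, and with no
terminal nodes. -/
def IsGameTree (T : Set (List ℕ)) : Prop :=
  T.Nonempty ∧ (∀ p ∈ T, ∀ q : List ℕ, q <+: p → q ∈ T) ∧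
    ∀ p ∈ T, ∃ n : ℕ, p ++ [n] ∈ T

/-- The finite initial segment of `x : ℕ → ℕ` of length `k`, as a list. -/
def seg (x : ℕ → ℕ) (k : ℕ) : List ℕ := (List.range k).map x

/-- The body `[T]` of a tree: all infinite plays whose finite initial segments
all lie in `T`. -/
def body (T : Set (List ℕ)) : Set (ℕ → ℕ) := {x | ∀ k, seg x k ∈ T}

/-- The localization `T_p` of `T` at a position `p`: all positions comparable
with `p`. -/
def restrict (T : Set (List ℕ)) (p : List ℕ) : Set (List ℕ) :=
  {q ∈ T | q <+: p ∨ p <+: q}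

/-- `x` is a play consistent with `σ` used as a strategy for player I, who
moves at even stages. -/
def ConsWithI (σ : List ℕ → ℕ) (x : ℕ → ℕ) : Prop :=
  ∀ k, Even k → x k = σ (seg x k)

/-- `x` is a play consistent with `σ` used as a strategy for player II, who
moves at odd stages. -/
def ConsWithII (σ : List ℕ → ℕ) (x : ℕ → ℕ) : Prop :=
  ∀ k, ¬ Even k → x k = σ (seg x k)

/-- `σ` is a winning strategy for player I in the game `G(A; T)`: it assigns a
legal move at every position of `T` where it is I's turn, and every play in
`[T]` consistent with it lies in `A`. -/
def WinStratI (T : Set (List ℕ)) (A : Set (ℕ → ℕ)) (σ : List ℕ → ℕ) : Prop :=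
  (∀ p ∈ T, Even p.length → p ++ [σ p] ∈ T) ∧
    ∀ x ∈ body T, ConsWithI σ x → x ∈ A

/-- `σ` is a winning strategy for player II in the game `G(A; T)`: it assigns a
legal move at every position of `T` where it is II's turn, and every play in
`[T]` consistent with it lies outside `A`. -/
def WinStratII (T : Set (List ℕ)) (A : Set (ℕ → ℕ)) (σ : List ℕ → ℕ) : Prop :=
  (∀ p ∈ T, ¬ Even p.length → p ++ [σ p] ∈ T) ∧
    ∀ x ∈ body T, ConsWithII σ x → x ∉ A

/-- `S` is a quasi-strategy for player II in the game tree `T`: a game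
subtree which does not restrict I's moves. -/
def QuasiII (T S : Set (List ℕ)) : Prop :=
  IsGameTree S ∧ S ⊆ T ∧
    ∀ p ∈ S, Even p.length → ∀ n : ℕ, p ++ [n] ∈ T → p ++ [n] ∈ S

/-- Player II's non-losing quasi-strategy `T'` for `G(A ∩ [T]; T)`. -/
def NonLosing (T : Set (List ℕ)) (A : Set (ℕ → ℕ)) : Set (List ℕ) :=
  {p ∈ T | ∀ q : List ℕ, q <+: p → Even q.length →
    ¬ ∃ σ, WinStratI (restrict T q) (A ∩ body (restrict T q)) σ}

/-- A position `p` of `T'` is good (w.r.t. `A` and `B ⊆ A`) if there is a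
quasi-strategy `S` for II in `T'_p` with `[S] ∩ B = ∅` such that I has no
winning strategy in `G(A ∩ [S]; S)`. -/
def Good (T' : Set (List ℕ)) (A B : Set (ℕ → ℕ)) (p : List ℕ) : Prop :=
  p ∈ T' ∧ ∃ S : Set (List ℕ), QuasiII (restrict T' p) S ∧ body S ∩ B = ∅ ∧
    ¬ ∃ σ, WinStratI S (A ∩ body S) σ

/-!
Let `T'` be player II's non-losing quasi-strategy in `T`; I has no winning strategy on `T'`
either. Call a position `p` of `T'` good if some quasi-strategy for II in `T'_p` avoids `B` while
I still has no winning strategy in it; it suffices that `[]` be good. Write `B = ⋂ₘ Bₘ` with `Bₘ`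
open.

If `p` is not good, then from `p` player I can force the play into `A` or onto a later non-good
position `q` with `cyl q ⊆ Bₘ`: otherwise, on II's non-losing tree for that game, graft good
witnesses at the first positions `q` with `cyl q ⊆ Bₘ`; the result avoids `B` (a branch in `B`
eventually has `cyl q ⊆ Bₘ`) and would make `p` good.

If `[]` were not good, I could chain these strategies, moving from `Bₘ` to `Bₘ₊₁` whenever a
non-good position `q` with `cyl q ⊆ Bₘ` is reached. A play with finitely many switches ends in
`A`, one with infinitely many lies in every `Bₘ`, hence in `B ⊆ A`; so I would win on `T'`.
-/

section Sequences

variable {x : ℕ → ℕ} {j k : ℕ} {q t : List ℕ}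

@[simp] lemma seg_length (x : ℕ → ℕ) (k : ℕ) : (seg x k).length = k := by
  simp [seg]

@[simp] lemma seg_zero (x : ℕ → ℕ) : seg x 0 = [] := rfl

lemma seg_succ (x : ℕ → ℕ) (k : ℕ) : seg x (k + 1) = seg x k ++ [x k] := by
  simp [seg, List.range_succ]

lemma seg_take (x : ℕ → ℕ) (j k : ℕ) : (seg x k).take j = seg x (min j k) := by
  simp [seg, ← List.map_take, List.take_range]

lemma seg_prefix_seg (h : j ≤ k) : seg x j <+: seg x k := by
  rw [← min_eq_left h, ← seg_take]
  exact List.take_prefix _ _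

lemma prefix_seg_iff : q <+: seg x k ↔ q.length ≤ k ∧ seg x q.length = q := by
  constructor
  · intro h
    have hlen : q.length ≤ k := by simpa using h.length_le
    refine ⟨hlen, ?_⟩
    have hq := List.prefix_iff_eq_take.1 h
    rw [seg_take, min_eq_left hlen] at hq
    exact hq.symm
  · rintro ⟨hlen, hq⟩
    exact hq ▸ seg_prefix_seg hlen

lemma append_singleton_prefix_seg {n : ℕ} (h : t ++ [n] <+: seg x k) :
    seg x t.length = t ∧ x t.length = n := by
  have hseg := (prefix_seg_iff.1 h).2
  rw [List.length_append, List.length_singleton, seg_succ] at hseg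
  exact List.append_singleton_inj.1 hseg

lemma List.IsPrefix.exists_append_singleton_prefix (h : t <+: q) (hne : t ≠ q) :
    ∃ n, t ++ [n] <+: q := by
  obtain ⟨_ | ⟨n, r⟩, rfl⟩ := h
  · exact absurd (List.append_nil t).symm hne
  · exact ⟨n, r, by simp⟩

lemma List.prefix_of_comparable_of_length_le (h : t <+: q ∨ q <+: t)
    (hlen : t.length ≤ q.length) : t <+: q := by
  rcases h with h | h
  · exact h
  · rw [h.eq_of_length (le_antisymm h.length_le hlen)]

lemma exists_cylinder_subset {V : Set (ℕ → ℕ)} (hV : IsOpen V) (hx : x ∈ V) :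
    ∃ k, PiNat.cylinder x k ⊆ V := by
  obtain ⟨_, ⟨y, k, rfl⟩, hxy, hyV⟩ :=
    (PiNat.isTopologicalBasis_cylinders fun _ => ℕ).exists_subset_of_mem_open hx hV
  exact ⟨k, PiNat.mem_cylinder_iff_eq.1 hxy ▸ hyV⟩

end Sequences

def cyl (q : List ℕ) : Set (ℕ → ℕ) := {y | seg y q.length = q}

lemma cyl_seg (x : ℕ → ℕ) (k : ℕ) : cyl (seg x k) = PiNat.cylinder x k := by
  ext y
  simp [cyl, PiNat.mem_cylinder_iff, seg, List.map_inj_left]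

lemma mem_cyl_seg (x : ℕ → ℕ) (k : ℕ) : x ∈ cyl (seg x k) := by
  simp [cyl]

section Trees

variable {T S W : Set (List ℕ)} {p q r : List ℕ} {x : ℕ → ℕ}

lemma IsGameTree.mem_of_prefix (hT : IsGameTree T) (hq : q ∈ T) (hp : p <+: q) : p ∈ T :=
  hT.2.1 q hq p hp

lemma IsGameTree.nil_mem (hT : IsGameTree T) : [] ∈ T :=
  hT.1.elim fun _ hq => hT.mem_of_prefix hq List.nil_prefix

lemma IsGameTree.exists_even_extension (hT : IsGameTree T) (hq : q ∈ T) :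
    ∃ r ∈ T, q <+: r ∧ Even r.length := by
  by_cases hev : Even q.length
  · exact ⟨q, hq, List.prefix_refl q, hev⟩
  · obtain ⟨n, hn⟩ := hT.2.2 q hq
    exact ⟨q ++ [n], hn, List.prefix_append q [n], by simpa [Nat.even_add_one] using hev⟩

lemma body_mono (h : S ⊆ T) : body S ⊆ body T := fun _ hx k => h (hx k)

lemma restrict_subset (T : Set (List ℕ)) (p : List ℕ) : restrict T p ⊆ T := fun _ h => h.1

@[simp] lemma restrict_nil (T : Set (List ℕ)) : restrict T [] = T := by
  ext q
  simp [restrict]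

lemma restrict_restrict_of_prefix (h : p <+: q) :
    restrict (restrict T p) q = restrict T q := by
  ext r
  refine ⟨fun ⟨⟨hr, _⟩, hrq⟩ => ⟨hr, hrq⟩, fun ⟨hr, hrq⟩ => ⟨⟨hr, ?_⟩, hrq⟩⟩
  rcases hrq with hrq | hqr
  · exact List.prefix_or_prefix_of_prefix hrq h
  · exact Or.inr (h.trans hqr)

lemma mem_body_restrict : x ∈ body (restrict T q) ↔ x ∈ body T ∧ seg x q.length = q := by
  refine ⟨fun h => ⟨body_mono (restrict_subset T q) h, ?_⟩, fun ⟨hx, hxq⟩ k => ⟨hx k, ?_⟩⟩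
  · rcases (h q.length).2 with h' | h'
    · exact h'.eq_of_length (seg_length x _)
    · exact (h'.eq_of_length (seg_length x _).symm).symm
  · rw [← hxq]
    rcases le_total k q.length with hk | hk
    · exact Or.inl (seg_prefix_seg hk)
    · exact Or.inr (seg_prefix_seg hk)

lemma isGameTree_restrict (hT : IsGameTree T) (hq : q ∈ T) : IsGameTree (restrict T q) := by
  refine ⟨⟨q, hq, Or.inl (List.prefix_refl q)⟩,
    fun r ⟨hr, hrq⟩ s hs => ⟨hT.mem_of_prefix hr hs, ?_⟩, fun r ⟨hr, hrq⟩ => ?_⟩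
  · rcases hrq with hrq | hqr
    · exact Or.inl (hs.trans hrq)
    · exact List.prefix_or_prefix_of_prefix hs hqr
  · by_cases hrq' : r <+: q ∧ r ≠ q
    · obtain ⟨n, hn⟩ := hrq'.1.exists_append_singleton_prefix hrq'.2
      exact ⟨n, hT.mem_of_prefix hq hn, Or.inl hn⟩
    · have hqr : q <+: r := by
        rcases hrq with hrq | hqr
        · exact (not_and_not_right.1 hrq' hrq) ▸ List.prefix_refl q
        · exact hqr
      obtain ⟨n, hn⟩ := hT.2.2 r hr
      exact ⟨n, hn, Or.inr (hqr.trans (List.prefix_append r [n]))⟩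

lemma QuasiII.base_mem (h : QuasiII (restrict T q) W) : q ∈ W := by
  suffices ∀ j ≤ q.length, q.take j ∈ W by simpa using this q.length le_rfl
  intro j hj
  induction j with
  | zero => simpa using h.1.nil_mem
  | succ j ih =>
    obtain ⟨n, hn⟩ := h.1.2.2 _ (ih (by omega))
    have hlen : (q.take j ++ [n]).length = j + 1 := by simp; omega
    have hpre : q.take j ++ [n] <+: q :=
      List.prefix_of_comparable_of_length_le (h.2.1 hn).2 (by omega)
    rwa [List.prefix_iff_eq_take.1 hpre, hlen] at hn

lemma QuasiII.trans (hS : QuasiII T S) (hW : QuasiII S W) : QuasiII T W :=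
  ⟨hW.1, hW.2.1.trans hS.2.1,
    fun p hp hev n hn => hW.2.2 p hp hev n (hS.2.2 p (hW.2.1 hp) hev n hn)⟩

end Trees

def ConsPosI (σ : List ℕ → ℕ) (r : List ℕ) : Prop :=
  ∀ t n, t ++ [n] <+: r → Even t.length → n = σ t

noncomputable def someMove (V : Set (List ℕ)) (r : List ℕ) : ℕ :=
  Classical.epsilon fun n => r ++ [n] ∈ V

section Strategies

variable {V : Set (List ℕ)} {A A' : Set (ℕ → ℕ)} {σ τ : List ℕ → ℕ} {x : ℕ → ℕ}
  {r t e : List ℕ}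

lemma IsGameTree.append_someMove_mem (hV : IsGameTree V) (hr : r ∈ V) :
    r ++ [someMove V r] ∈ V :=
  Classical.epsilon_spec (hV.2.2 r hr)

lemma ConsPosI.of_prefix (h : ConsPosI σ r) (ht : t <+: r) : ConsPosI σ t :=
  fun s n hs => h s n (hs.trans ht)

lemma consPosI_nil (σ : List ℕ → ℕ) : ConsPosI σ [] := fun s n h =>
  absurd h.length_le (by simp)

lemma consPosI_append_singleton {n : ℕ} (h : ConsPosI σ r) (hn : Even r.length → n = σ r) :
    ConsPosI σ (r ++ [n]) := by
  intro s m hs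
  rcases List.prefix_concat_iff.1 hs with hs | hs
  · obtain ⟨rfl, rfl⟩ := List.append_singleton_inj.1 hs
    exact hn
  · exact h s m hs

lemma ConsPosI.apply_seg {k : ℕ} (h : ConsPosI σ (seg x (k + 1))) (hk : Even k) :
    x k = σ (seg x k) :=
  h (seg x k) (x k) (seg_succ x k ▸ List.prefix_refl _) (by simpa using hk)

lemma consWithI_iff_forall_consPosI : ConsWithI σ x ↔ ∀ k, ConsPosI σ (seg x k) := by
  refine ⟨fun h k s n hs hev => ?_, fun h k hk => (h (k + 1)).apply_seg hk⟩
  obtain ⟨hseg, rfl⟩ := append_singleton_prefix_seg hs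
  have := h s.length hev
  rwa [hseg] at this

lemma WinStratI.mono (h : WinStratI V A σ) (hA : A ⊆ A') : WinStratI V A' σ :=
  ⟨h.1, fun x hx hc => hA (h.2 x hx hc)⟩

lemma winStratI_inter_body_iff : WinStratI V (A ∩ body V) σ ↔ WinStratI V A σ :=
  ⟨fun h => h.mono Set.inter_subset_left, fun h => ⟨h.1, fun x hx hc => ⟨h.2 x hx hc, hx⟩⟩⟩

lemma exists_winStratI_of_body_subset (hV : IsGameTree V) (h : body V ⊆ A) :
    ∃ σ, WinStratI V A σ :=
  ⟨someMove V, fun _ hr _ => hV.append_someMove_mem hr, fun _ hx _ => h hx⟩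

/-- Legality is only needed at the positions consistent with the strategy: elsewhere we
may substitute any legal move without affecting the consistent plays. -/
lemma exists_winStratI_of_legal_of_consPosI (hV : IsGameTree V)
    (hleg : ∀ r ∈ V, Even r.length → ConsPosI σ r → r ++ [σ r] ∈ V)
    (hwin : ∀ x ∈ body V, ConsWithI σ x → x ∈ A) : ∃ σ', WinStratI V A σ' := by
  classical
  refine ⟨fun r => if r ++ [σ r] ∈ V then σ r else someMove V r, fun r hr _ => ?_,
    fun x hx hcons => hwin x hx ?_⟩
  · dsimp only
    split_ifs with h
    exacts [h, hV.append_someMove_mem hr]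
  · rw [consWithI_iff_forall_consPosI]
    intro k
    induction k with
    | zero => exact consPosI_nil σ
    | succ k ih =>
      rw [seg_succ]
      refine consPosI_append_singleton ih fun hk => ?_
      have hk' : Even k := by simpa using hk
      have := hcons k hk'
      dsimp only at this
      rwa [if_pos (hleg _ (hx k) hk ih)] at this

lemma WinStratI.consPosI_base (hV : IsGameTree V) (ht : t ∈ V)
    (hτ : WinStratI (restrict V t) A τ) : ConsPosI τ t := by
  intro s n hs hev
  have hsV : s ∈ restrict V t :=
    ⟨hV.mem_of_prefix ht ((List.prefix_append s [n]).trans hs),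
      Or.inl ((List.prefix_append s [n]).trans hs)⟩
  have hmove : s ++ [τ s] <+: t :=
    List.prefix_of_comparable_of_length_le (hτ.1 s hsV hev).2 (by simpa using hs.length_le)
  have := (List.prefix_of_prefix_length_le hs hmove (by simp)).eq_of_length (by simp)
  exact (List.append_singleton_inj.1 this).2

lemma WinStratI.mem_of_consistent_from (hV : IsGameTree V)
    (hτ : WinStratI (restrict V t) A τ) (hx : x ∈ body V) (hxt : seg x t.length = t)
    (hcons : ∀ k, t.length ≤ k → Even k → x k = τ (seg x k)) : x ∈ A := by
  refine hτ.2 x (mem_body_restrict.2 ⟨hx, hxt⟩) fun k hk => ?_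
  rcases lt_or_ge k t.length with hkt | hkt
  · have hbase := hτ.consPosI_base hV (hxt ▸ hx t.length)
    exact (hbase.of_prefix (hxt ▸ seg_prefix_seg hkt)).apply_seg hk
  · exact hcons k hkt hk

lemma WinStratI.restrict_of_consPosI (hσ : WinStratI V A σ) (he : ConsPosI σ e) :
    WinStratI (restrict V e) A σ := by
  refine ⟨fun r ⟨hr, hre⟩ hev => ⟨hσ.1 r hr hev, ?_⟩,
    fun x hx hc => hσ.2 x (body_mono (restrict_subset V e) hx) hc⟩
  rcases hre with hre | her
  · by_cases hne : r = e
    · exact Or.inr (hne ▸ List.prefix_append r _)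
    · obtain ⟨n, hn⟩ := hre.exists_append_singleton_prefix hne
      exact Or.inl (he r n hn hev ▸ hn)
  · exact Or.inr (her.trans (List.prefix_append r _))

end Strategies

section Gluing

variable {V : Set (List ℕ)} {P : Set (List ℕ)} {A : Set (ℕ → ℕ)} {σ : List ℕ → ℕ}
  {τ : List ℕ → List ℕ → ℕ} {r s t : List ℕ}

lemma IsAntichain.eq_of_prefix_of_prefix (hP : IsAntichain (· <+: ·) P) (hs : s ∈ P)
    (ht : t ∈ P) (hsr : s <+: r) (htr : t <+: r) : s = t := by
  rcases List.prefix_or_prefix_of_prefix hsr htr with h | h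
  exacts [hP.eq hs ht h, hP.eq' hs ht h]

noncomputable def glue (σ : List ℕ → ℕ) (P : Set (List ℕ)) (τ : List ℕ → List ℕ → ℕ)
    (r : List ℕ) : ℕ :=
  open Classical in if h : ∃ t ∈ P, t <+: r then τ h.choose r else σ r

lemma glue_of_prefix (hP : IsAntichain (· <+: ·) P) (ht : t ∈ P) (htr : t <+: r) :
    glue σ P τ r = τ t r := by
  have h : ∃ t ∈ P, t <+: r := ⟨t, ht, htr⟩
  rw [glue, dif_pos h, hP.eq_of_prefix_of_prefix h.choose_spec.1 ht h.choose_spec.2 htr]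

lemma glue_of_not_prefix (h : ∀ t ∈ P, ¬ t <+: r) : glue σ P τ r = σ r := by
  rw [glue, dif_neg (by simpa using h)]

lemma consPosI_of_glue (h : ConsPosI (glue σ P τ) r) (hr : ∀ t ∈ P, t <+: r → t = r) :
    ConsPosI σ r := by
  intro s n hs hev
  rw [h s n hs hev, glue_of_not_prefix fun t ht hts => ?_]
  have htr := hr t ht (hts.trans ((List.prefix_append s [n]).trans hs))
  have h1 := hts.length_le
  have h2 := hs.length_le
  rw [htr] at h1
  simp at h2
  omega

theorem exists_winStratI_glue (hV : IsGameTree V) (hP : IsAntichain (· <+: ·) P)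
    (hleg : ∀ r ∈ V, Even r.length → ConsPosI σ r → (∀ t ∈ P, ¬ t <+: r) → r ++ [σ r] ∈ V)
    (hwin : ∀ x ∈ body V, ConsWithI σ x → (∀ k, seg x k ∉ P) → x ∈ A)
    (hτ : ∀ t ∈ V, t ∈ P → ConsPosI σ t → ∃ τ, WinStratI (restrict V t) A τ) :
    ∃ ρ, WinStratI V A ρ := by
  choose! τ hτ using hτ
  have hfirst : ∀ t ∈ P, ∀ r, t <+: r → ConsPosI (glue σ P τ) r → ConsPosI σ t :=
    fun t ht r htr hr => consPosI_of_glue (hr.of_prefix htr) fun t' ht' ht't =>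
      hP.eq_of_prefix_of_prefix ht' ht ht't (List.prefix_refl t)
  refine exists_winStratI_of_legal_of_consPosI hV (σ := glue σ P τ) (fun r hr hev hcons => ?_)
    fun x hx hcons => ?_
  · by_cases hhit : ∃ t ∈ P, t <+: r
    · obtain ⟨t, ht, htr⟩ := hhit
      have htV := hV.mem_of_prefix hr htr
      rw [glue_of_prefix hP ht htr]
      exact restrict_subset V t
        ((hτ t htV ht (hfirst t ht r htr hcons)).1 r ⟨hr, Or.inr htr⟩ hev)
    · push Not at hhit
      rw [glue_of_not_prefix hhit]
      exact hleg r hr hev (consPosI_of_glue hcons fun t ht htr => absurd htr (hhit t ht)) hhit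
  · by_cases hhit : ∃ k, seg x k ∈ P
    · obtain ⟨k, hk⟩ := hhit
      have hcons' := consWithI_iff_forall_consPosI.1 hcons
      refine (hτ _ (hx k) hk (hfirst _ hk _ (List.prefix_refl _) (hcons' k))).mem_of_consistent_from
        hV hx (by simp) fun j hj hev => ?_
      rw [hcons j hev, glue_of_prefix hP hk (seg_prefix_seg (by simpa using hj))]
    · push Not at hhit
      refine hwin x hx (fun k hev => ?_) hhit
      rw [hcons k hev, glue_of_not_prefix fun t ht htk => ?_]
      exact hhit t.length (by rwa [(prefix_seg_iff.1 htk).2])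

def firstHits (C : Set (List ℕ)) : Set (List ℕ) := {r ∈ C | ∀ s ∈ C, s <+: r → s = r}

lemma firstHits_subset (C : Set (List ℕ)) : firstHits C ⊆ C := fun _ h => h.1

lemma isAntichain_firstHits (C : Set (List ℕ)) : IsAntichain (· <+: ·) (firstHits C) :=
  fun _ ha _ hb hne hab => hne (hb.2 _ ha.1 hab)

lemma exists_firstHits_prefix {C : Set (List ℕ)} (hr : r ∈ C) : ∃ s ∈ firstHits C, s <+: r := by
  classical
  have hex : ∃ k, r.take k ∈ C := ⟨r.length, by simpa using hr⟩
  refine ⟨r.take (Nat.find hex), ⟨Nat.find_spec hex, fun s hs hsr => ?_⟩, List.take_prefix _ _⟩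
  have hsr' := List.prefix_iff_eq_take.1 (hsr.trans (List.take_prefix _ r))
  have hmin := Nat.find_min' hex (hsr' ▸ hs : r.take s.length ∈ C)
  exact hsr.eq_of_length (le_antisymm hsr.length_le (by simpa using Or.inl hmin))

lemma exists_seg_mem_firstHits {C : Set (List ℕ)} {x : ℕ → ℕ} {k : ℕ} (hk : seg x k ∈ C) :
    ∃ j, seg x j ∈ firstHits C := by
  obtain ⟨s, hs, hsk⟩ := exists_firstHits_prefix hk
  exact ⟨s.length, by rwa [(prefix_seg_iff.1 hsk).2]⟩

end Gluing

section NonLosing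

variable {U : Set (List ℕ)} {A : Set (ℕ → ℕ)} {p q : List ℕ}

lemma mem_nonLosing_iff : p ∈ NonLosing U A ↔
    p ∈ U ∧ ∀ q, q <+: p → Even q.length → ¬ ∃ σ, WinStratI (restrict U q) A σ := by
  simp only [NonLosing, winStratI_inter_body_iff]
  rfl

lemma nonLosing_subset : NonLosing U A ⊆ U := fun _ h => h.1

lemma IsGameTree.mem_nonLosing_of_prefix (hU : IsGameTree U) (hp : p ∈ NonLosing U A)
    (hq : q <+: p) : q ∈ NonLosing U A :=
  ⟨hU.mem_of_prefix hp.1 hq, fun r hr => hp.2 r (hr.trans hq)⟩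

lemma nil_mem_nonLosing (hU : IsGameTree U) (h : ¬ ∃ σ, WinStratI U A σ) :
    [] ∈ NonLosing U A :=
  mem_nonLosing_iff.2 ⟨hU.nil_mem, fun q hq _ => by rwa [List.prefix_nil.1 hq, restrict_nil]⟩

lemma append_mem_nonLosing_of_even {n : ℕ} (hp : p ∈ NonLosing U A) (hev : Even p.length)
    (hn : p ++ [n] ∈ U) : p ++ [n] ∈ NonLosing U A := by
  refine ⟨hn, fun q hq hqev => ?_⟩
  rcases List.prefix_concat_iff.1 hq with rfl | hq
  · simp [Nat.even_add_one, hev] at hqev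
  · exact hp.2 q hq hqev

lemma exists_winStratI_restrict_of_forall_append {a : ℕ} (hU : IsGameTree U)
    (hq : q ++ [a] ∈ U) (hev : Even q.length)
    (h : ∀ n, q ++ [a] ++ [n] ∈ U → ∃ τ, WinStratI (restrict U (q ++ [a] ++ [n])) A τ) :
    ∃ σ, WinStratI (restrict U q) A σ := by
  classical
  have hV := isGameTree_restrict hU (hU.mem_of_prefix hq (List.prefix_append q [a]))
  refine exists_winStratI_glue (P := {t | ∃ n, t = q ++ [a] ++ [n]})
    (σ := fun r => if r = q then a else someMove (restrict U q) r) hV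
    (fun _ ⟨_, hs⟩ _ ⟨_, ht⟩ hne hst => hne (hst.eq_of_length (by simp [hs, ht])))
    (fun r hr _ _ _ => ?_) (fun x hx hcons hnot => ?_) fun t ⟨ht, _⟩ ⟨n, hn⟩ _ => ?_
  · split_ifs with hrq
    · rw [hrq]
      exact ⟨hq, Or.inr (List.prefix_append q [a])⟩
    · exact hV.append_someMove_mem hr
  · have hxq := (mem_body_restrict.1 hx).2
    have hxa : x q.length = a := by simpa [hxq] using hcons q.length (by simpa using hev)
    refine absurd ⟨x (q.length + 1), ?_⟩ (hnot (q.length + 2))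
    rw [seg_succ, seg_succ, hxq, hxa]
  · subst hn
    rw [restrict_restrict_of_prefix ((List.prefix_append q [a]).trans (List.prefix_append _ [n]))]
    exact h n ht

lemma exists_append_mem_nonLosing_of_odd (hU : IsGameTree U) (hp : p ∈ NonLosing U A)
    (hodd : ¬ Even p.length) : ∃ n, p ++ [n] ∈ NonLosing U A := by
  by_contra hall
  push Not at hall
  rcases List.eq_nil_or_concat' p with rfl | ⟨q, a, rfl⟩
  · exact hodd (by simp)
  have hev : Even q.length := by simpa [Nat.even_add_one] using hodd
  refine (mem_nonLosing_iff.1 hp).2 q (List.prefix_append q [a]) hev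
    (exists_winStratI_restrict_of_forall_append hU hp.1 hev fun n hn => ?_)
  by_contra hnw
  refine hall n (mem_nonLosing_iff.2 ⟨hn, fun r hr hrev => ?_⟩)
  rcases List.prefix_concat_iff.1 hr with rfl | hr
  exacts [hnw, (mem_nonLosing_iff.1 hp).2 r hr hrev]

lemma IsGameTree.nonLosing (hU : IsGameTree U) (h : ¬ ∃ σ, WinStratI U A σ) :
    IsGameTree (NonLosing U A) := by
  refine ⟨⟨[], nil_mem_nonLosing hU h⟩, fun p hp q hq => hU.mem_nonLosing_of_prefix hp hq,
    fun p hp => ?_⟩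
  by_cases hev : Even p.length
  · obtain ⟨n, hn⟩ := hU.2.2 p hp.1
    exact ⟨n, append_mem_nonLosing_of_even hp hev hn⟩
  · exact exists_append_mem_nonLosing_of_odd hU hp hev

lemma IsGameTree.quasiII_nonLosing (hU : IsGameTree U) (h : ¬ ∃ σ, WinStratI U A σ) :
    QuasiII U (NonLosing U A) :=
  ⟨hU.nonLosing h, nonLosing_subset, fun _ hp hev _ hn => append_mem_nonLosing_of_even hp hev hn⟩

/-- If I won `G(A; T')` on the non-losing tree `T'`, then I would win `G(A; U)` by following
that strategy until leaving `T'`, which can only happen at an even position from which I wins. -/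
theorem IsGameTree.not_exists_winStratI_nonLosing (hU : IsGameTree U)
    (h : ¬ ∃ σ, WinStratI U A σ) : ¬ ∃ σ, WinStratI (NonLosing U A) A σ := by
  rintro ⟨σ, hσ⟩
  set C := {t ∈ U | Even t.length ∧ ∃ τ, WinStratI (restrict U t) A τ}
  have hmem : ∀ r ∈ U, (∀ t ∈ firstHits C, ¬ t <+: r) → r ∈ NonLosing U A :=
    fun r hr hnot => mem_nonLosing_iff.2 ⟨hr, fun q hq hev hw => by
      obtain ⟨t, ht, htq⟩ :=
        exists_firstHits_prefix (show q ∈ C from ⟨hU.mem_of_prefix hr hq, hev, hw⟩)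
      exact hnot t ht (htq.trans hq)⟩
  refine h (exists_winStratI_glue hU (isAntichain_firstHits C)
    (fun r hr hev _ hnot => nonLosing_subset (hσ.1 r (hmem r hr hnot) hev))
    (fun x hx hcons hnot => hσ.2 x (fun k => hmem _ (hx k) fun t ht htk => ?_) hcons)
    fun t _ ht _ => (firstHits_subset C ht).2.2)
  exact hnot t.length (by rwa [(prefix_seg_iff.1 htk).2])

lemma IsGameTree.exists_not_mem_of_mem_nonLosing (hU : IsGameTree U)
    (hS : IsGameTree (NonLosing U A)) (hq : q ∈ NonLosing U A) :
    ∃ x ∈ body (restrict U q), x ∉ A := by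
  obtain ⟨r, hr, hqr, hev⟩ := hS.exists_even_extension hq
  by_contra hall
  push Not at hall
  refine (mem_nonLosing_iff.1 hr).2 r (List.prefix_refl r) hev
    (exists_winStratI_of_body_subset (isGameTree_restrict hU hr.1) fun x hx => hall x ?_)
  rw [← restrict_restrict_of_prefix hqr] at hx
  exact body_mono (restrict_subset _ r) hx

end NonLosing

def graft (S P : Set (List ℕ)) (W : List ℕ → Set (List ℕ)) : Set (List ℕ) :=
  {r | (r ∈ S ∧ ∀ e ∈ P, e <+: r → e = r) ∨ ∃ e ∈ P, e <+: r ∧ r ∈ W e}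

section Graft

variable {V S P : Set (List ℕ)} {W : List ℕ → Set (List ℕ)} {r s e : List ℕ} {x : ℕ → ℕ}

lemma mem_graft_of_mem (hr : r ∈ S) (h : ∀ e ∈ P, ¬ e <+: r) : r ∈ graft S P W :=
  Or.inl ⟨hr, fun e he her => absurd her (h e he)⟩

lemma mem_of_mem_graft (hPS : P ⊆ S) (hr : r ∈ graft S P W) (h : ∀ e ∈ P, e <+: r → e = r) :
    r ∈ S :=
  hr.elim (·.1) fun ⟨e, he, her, _⟩ => h e he her ▸ hPS he

lemma mem_of_mem_graft_of_prefix (hP : IsAntichain (· <+: ·) P)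
    (hW : ∀ e ∈ P, QuasiII (restrict V e) (W e)) (hr : r ∈ graft S P W) (he : e ∈ P)
    (her : e <+: r) : r ∈ W e := by
  rcases hr with ⟨_, hmin⟩ | ⟨e', he', he'r, hr⟩
  · rw [← hmin e he her]
    exact (hW e he).base_mem
  · rwa [hP.eq_of_prefix_of_prefix he he' her he'r]

lemma mem_graft_of_prefix (hS : IsGameTree S) (hPS : P ⊆ S) (hP : IsAntichain (· <+: ·) P)
    (hW : ∀ e ∈ P, QuasiII (restrict V e) (W e)) (hr : r ∈ graft S P W) (hs : s <+: r) :
    s ∈ graft S P W := by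
  rcases hr with ⟨hr, hmin⟩ | ⟨e, he, her, hrW⟩
  · refine Or.inl ⟨hS.mem_of_prefix hr hs, fun e he hes => ?_⟩
    have her := hmin e he (hes.trans hs)
    subst her
    exact hes.eq_of_length (le_antisymm hes.length_le hs.length_le)
  · rcases List.prefix_or_prefix_of_prefix her hs with hes | hse
    · exact Or.inr ⟨e, he, hes, (hW e he).1.mem_of_prefix hrW hs⟩
    · refine Or.inl ⟨hS.mem_of_prefix (hPS he) hse, fun e' he' he's => ?_⟩
      have := hP.eq_of_prefix_of_prefix he' he (he's.trans hse) (List.prefix_refl e)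
      subst this
      exact he's.eq_of_length (le_antisymm he's.length_le hse.length_le)

lemma append_mem_graft {n : ℕ} (hr : ∀ e ∈ P, ¬ e <+: r) (hn : r ++ [n] ∈ S) :
    r ++ [n] ∈ graft S P W := by
  refine Or.inl ⟨hn, fun e he hen => ?_⟩
  rcases List.prefix_concat_iff.1 hen with h | h
  exacts [h, absurd h (hr e he)]

lemma quasiII_graft (hS : QuasiII V S) (hPS : P ⊆ S) (hP : IsAntichain (· <+: ·) P)
    (hW : ∀ e ∈ P, QuasiII (restrict V e) (W e)) : QuasiII V (graft S P W) := by
  have hext : ∀ r ∈ graft S P W, (∃ n, r ++ [n] ∈ graft S P W) ∧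
      (Even r.length → ∀ n, r ++ [n] ∈ V → r ++ [n] ∈ graft S P W) := by
    intro r hr
    by_cases hhit : ∃ e ∈ P, e <+: r
    · obtain ⟨e, he, her⟩ := hhit
      have hrW := mem_of_mem_graft_of_prefix hP hW hr he her
      have hsnoc : ∀ n, e <+: r ++ [n] := fun n => her.trans (List.prefix_append r [n])
      obtain ⟨n, hn⟩ := (hW e he).1.2.2 r hrW
      exact ⟨⟨n, Or.inr ⟨e, he, hsnoc n, hn⟩⟩, fun hev n hn =>
        Or.inr ⟨e, he, hsnoc n, (hW e he).2.2 r hrW hev n ⟨hn, Or.inr (hsnoc n)⟩⟩⟩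
    · push Not at hhit
      have hrS := mem_of_mem_graft hPS hr fun e he her => absurd her (hhit e he)
      obtain ⟨n, hn⟩ := hS.1.2.2 r hrS
      exact ⟨⟨n, append_mem_graft hhit hn⟩, fun hev n hn =>
        append_mem_graft hhit (hS.2.2 r hrS hev n hn)⟩
  refine ⟨⟨⟨[], Or.inl ⟨hS.1.nil_mem, fun _ _ h => List.prefix_nil.1 h⟩⟩,
    fun r hr s hs => mem_graft_of_prefix hS.1 hPS hP hW hr hs, fun r hr => (hext r hr).1⟩,
    fun r hr => ?_, fun r hr hev => (hext r hr).2 hev⟩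
  rcases hr with ⟨hr, _⟩ | ⟨e, he, _, hrW⟩
  exacts [hS.2.1 hr, ((hW e he).2.1 hrW).1]

lemma restrict_graft (hS : IsGameTree S) (hPS : P ⊆ S) (hP : IsAntichain (· <+: ·) P)
    (hW : ∀ e ∈ P, QuasiII (restrict V e) (W e)) (he : e ∈ P) :
    restrict (graft S P W) e = W e := by
  ext r
  refine ⟨fun ⟨hr, hre⟩ => ?_, fun hr => ⟨?_, ((hW e he).2.1 hr).2⟩⟩
  · rcases hre with hre | her
    · exact (hW e he).1.mem_of_prefix (hW e he).base_mem hre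
    · exact mem_of_mem_graft_of_prefix hP hW hr he her
  · rcases ((hW e he).2.1 hr).2 with hre | her
    · exact mem_graft_of_prefix hS hPS hP hW
        (Or.inr ⟨e, he, List.prefix_refl e, (hW e he).base_mem⟩) hre
    · exact Or.inr ⟨e, he, her, hr⟩

lemma mem_body_of_mem_body_graft (hPS : P ⊆ S) (hx : x ∈ body (graft S P W))
    (hnot : ∀ k, seg x k ∉ P) : x ∈ body S :=
  fun k => mem_of_mem_graft hPS (hx k) fun e he hek =>
    absurd (by rwa [(prefix_seg_iff.1 hek).2]) (hnot e.length)

lemma mem_body_of_mem_body_graft_of_mem (hS : IsGameTree S) (hPS : P ⊆ S)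
    (hP : IsAntichain (· <+: ·) P) (hW : ∀ e ∈ P, QuasiII (restrict V e) (W e)) {k : ℕ}
    (hx : x ∈ body (graft S P W)) (hk : seg x k ∈ P) : x ∈ body (W (seg x k)) := by
  rw [← restrict_graft hS hPS hP hW hk]
  exact mem_body_restrict.2 ⟨hx, by simp⟩

/-- A winning strategy for I in the graft either reaches some `e ∈ P`, and then wins in `W e`, or
never does, and then (modified off its plays) wins in `S`. -/
theorem not_exists_winStratI_graft {A : Set (ℕ → ℕ)} (hS : QuasiII V S) (hPS : P ⊆ S)
    (hP : IsAntichain (· <+: ·) P) (hW : ∀ e ∈ P, QuasiII (restrict V e) (W e))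
    (hSA : ¬ ∃ σ, WinStratI S A σ) (hWA : ∀ e ∈ P, ¬ ∃ σ, WinStratI (W e) A σ) :
    ¬ ∃ σ, WinStratI (graft S P W) A σ := by
  rintro ⟨σ, hσ⟩
  refine hSA (exists_winStratI_glue hS.1 hP (fun r hr hev _ hnot => ?_)
    (fun x hx hcons hnot => hσ.2 x (fun k => mem_graft_of_mem (hx k) fun e he hek => ?_) hcons)
    fun t _ ht hcons => absurd ⟨σ, ?_⟩ (hWA t ht))
  · refine mem_of_mem_graft hPS (hσ.1 r (mem_graft_of_mem hr hnot) hev) fun e he her => ?_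
    rcases List.prefix_concat_iff.1 her with h | h
    exacts [h, absurd h (hnot e he)]
  · exact hnot e.length (by rwa [(prefix_seg_iff.1 hek).2])
  · rw [← restrict_graft hS.1 hPS hP hW ht]
    exact hσ.restrict_of_consPosI hcons

end Graft

def Bad (T' : Set (List ℕ)) (A B V : Set (ℕ → ℕ)) (q : List ℕ) : Prop :=
  q ∈ T' ∧ ¬ Good T' A B q ∧ cyl q ⊆ V

def reachesBad (T' : Set (List ℕ)) (A B V : Set (ℕ → ℕ)) (n : ℕ) : Set (ℕ → ℕ) :=
  {x | ∃ k, n < k ∧ Bad T' A B V (seg x k)}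

section KeyClaim

variable {T' : Set (List ℕ)} {A B V : Set (ℕ → ℕ)} {p e : List ℕ}

lemma good_of_mem_nonLosing (hT' : IsGameTree T') (hp : p ∈ T')
    (hnw : ¬ ∃ σ, WinStratI (restrict T' p) (A ∪ reachesBad T' A B V p.length) σ)
    (he : e ∈ NonLosing (restrict T' p) (A ∪ reachesBad T' A B V p.length))
    (hlen : p.length < e.length) (hcyl : cyl e ⊆ V) : Good T' A B e := by
  by_contra hng
  have hU := isGameTree_restrict hT' hp
  obtain ⟨x, hx, hxA⟩ := hU.exists_not_mem_of_mem_nonLosing (hU.nonLosing hnw) he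
  have hxe := (mem_body_restrict.1 hx).2
  exact hxA (Or.inr ⟨e.length, hlen, by rw [hxe]; exact ⟨(nonLosing_subset he).1, hng, hcyl⟩⟩)

theorem exists_winStratI_of_not_good (hT' : IsGameTree T') (hBV : B ⊆ V) (hV : IsOpen V)
    (hp : p ∈ T') (hng : ¬ Good T' A B p) :
    ∃ σ, WinStratI (restrict T' p) (A ∪ reachesBad T' A B V p.length) σ := by
  by_contra hnw
  set A' := A ∪ reachesBad T' A B V p.length
  set U := restrict T' p
  have hU : IsGameTree U := isGameTree_restrict hT' hp
  set S := NonLosing U A'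
  set C := {r ∈ S | p.length < r.length ∧ cyl r ⊆ V}
  have hPS : firstHits C ⊆ S := fun _ he => he.1.1
  have hP := isAntichain_firstHits C
  choose! W hW using fun e (he : e ∈ firstHits C) =>
    (good_of_mem_nonLosing hT' hp hnw he.1.1 he.1.2.1 he.1.2.2).2
  have hWq : ∀ e ∈ firstHits C, QuasiII (restrict U e) (W e) := fun e he => by
    rw [restrict_restrict_of_prefix (List.prefix_of_comparable_of_length_le
      (nonLosing_subset he.1.1).2.symm he.1.2.1.le)]
    exact (hW e he).1
  have hSq : QuasiII U S := hU.quasiII_nonLosing hnw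
  refine hng ⟨hp, graft S (firstHits C) W, quasiII_graft hSq hPS hP hWq,
    Set.eq_empty_of_forall_notMem fun x ⟨hx, hxB⟩ => ?_, fun hσ => ?_⟩
  · by_cases hhit : ∃ k, seg x k ∈ firstHits C
    · obtain ⟨k, hk⟩ := hhit
      exact (Set.eq_empty_iff_forall_notMem.1 (hW _ hk).2.1) x
        ⟨mem_body_of_mem_body_graft_of_mem hSq.1 hPS hP hWq hx hk, hxB⟩
    · push Not at hhit
      obtain ⟨k, hk⟩ := exists_cylinder_subset hV (hBV hxB)
      have hmem : seg x (max k (p.length + 1)) ∈ C :=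
        ⟨mem_body_of_mem_body_graft hPS hx hhit _, by simp, by
          rw [cyl_seg]
          exact (PiNat.cylinder_anti x (le_max_left _ _)).trans hk⟩
      obtain ⟨j, hj⟩ := exists_seg_mem_firstHits hmem
      exact hhit j hj
  · refine not_exists_winStratI_graft hSq hPS hP hWq
      (fun ⟨σ, hσ⟩ => hU.not_exists_winStratI_nonLosing hnw ⟨σ, hσ.mono Set.subset_union_left⟩)
      (fun e he => by simpa only [winStratI_inter_body_iff] using (hW e he).2.2) ?_
    simpa only [winStratI_inter_body_iff] using hσ

end KeyClaim

noncomputable def switchState (c : List ℕ → ℕ → Prop) (q : List ℕ) : List ℕ × ℕ :=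
  open Classical in
  if h : q = [] then ([], 0) else
    let s := switchState c q.dropLast
    if c q s.2 then (q, s.2 + 1) else s
termination_by q.length
decreasing_by simp [List.length_pos_iff.2 h]

section Switching

variable {c : List ℕ → ℕ → Prop} {q : List ℕ} {x : ℕ → ℕ}

@[simp] lemma switchState_nil (c : List ℕ → ℕ → Prop) : switchState c [] = ([], 0) := by
  rw [switchState, dif_pos rfl]

open Classical in
lemma switchState_append_singleton (c : List ℕ → ℕ → Prop) (q : List ℕ) (a : ℕ) :
    switchState c (q ++ [a]) = if c (q ++ [a]) (switchState c q).2
      then (q ++ [a], (switchState c q).2 + 1) else switchState c q := by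
  rw [switchState, dif_neg (by simp)]
  simp

lemma switchState_fst_prefix (c : List ℕ → ℕ → Prop) (q : List ℕ) :
    (switchState c q).1 <+: q := by
  induction q using List.reverseRecOn with
  | nil => simp
  | append_singleton q a ih =>
    rw [switchState_append_singleton]
    split_ifs
    exacts [List.prefix_refl _, ih.trans (List.prefix_append q [a])]

lemma switchState_fst_induction {M : List ℕ → Prop} (hnil : M []) (hc : ∀ r m, c r m → M r)
    (q : List ℕ) : M (switchState c q).1 := by
  induction q using List.reverseRecOn with
  | nil => simpa using hnil
  | append_singleton q a ih =>
    rw [switchState_append_singleton]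
    split_ifs with h
    exacts [hc _ _ h, ih]

open Classical in
lemma switchState_seg_succ (c : List ℕ → ℕ → Prop) (x : ℕ → ℕ) (k : ℕ) :
    switchState c (seg x (k + 1)) = if c (seg x (k + 1)) (switchState c (seg x k)).2
      then (seg x (k + 1), (switchState c (seg x k)).2 + 1) else switchState c (seg x k) := by
  rw [seg_succ, switchState_append_singleton]

lemma switchState_seg_eq_of_le {j k : ℕ} (hk : (switchState c (seg x j)).1.length ≤ k)
    (hkj : k ≤ j) : switchState c (seg x k) = switchState c (seg x j) := by
  induction j with
  | zero => rw [Nat.le_zero.1 hkj]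
  | succ j ih =>
    rcases Nat.lt_or_ge k (j + 1) with hkj' | hkj'
    · rw [switchState_seg_succ] at hk ⊢
      split_ifs with h
      · simp [h] at hk
        omega
      · simp only [h, if_false] at hk
        exact ih hk (by omega)
    · rw [le_antisymm hkj hkj']

lemma switchState_seg_snd_le {i : ℕ} (hi : ∀ k, ¬ c (seg x k) i) (k : ℕ) :
    (switchState c (seg x k)).2 ≤ i := by
  induction k with
  | zero => simp
  | succ k ih =>
    rw [switchState_seg_succ]
    split_ifs with h
    · have : (switchState c (seg x k)).2 ≠ i := fun he => hi _ (he ▸ h)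
      simp only
      omega
    · exact ih

lemma switchState_seg_eq_of_ge {N : ℕ} (hN : ∀ k, (switchState c (seg x k)).2 ≤
    (switchState c (seg x N)).2) {k : ℕ} (hk : N ≤ k) :
    switchState c (seg x k) = switchState c (seg x N) := by
  induction k, hk using Nat.le_induction with
  | base => rfl
  | succ k hk ih =>
    by_cases h : c (seg x (k + 1)) (switchState c (seg x k)).2
    · have := hN (k + 1)
      rw [switchState_seg_succ, if_pos h, ih] at this
      simp at this
    · rw [switchState_seg_succ, if_neg h, ih]

theorem switchState_seg_settles_or (c : List ℕ → ℕ → Prop) (x : ℕ → ℕ) :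
    (∃ r m, (∀ k, r.length ≤ k → switchState c (seg x k) = (r, m)) ∧
      ∀ k, r.length < k → ¬ c (seg x k) m) ∨ ∀ i, ∃ k, c (seg x k) i := by
  by_cases hall : ∀ i, ∃ k, c (seg x k) i
  · exact Or.inr hall
  push Not at hall
  obtain ⟨i, hi⟩ := hall
  have hbdd : BddAbove (Set.range fun k => (switchState c (seg x k)).2) :=
    ⟨i, Set.forall_mem_range.2 (switchState_seg_snd_le hi)⟩
  obtain ⟨N, hN⟩ := Nat.sSup_mem (Set.range_nonempty _) hbdd
  have hmax : ∀ k, (switchState c (seg x k)).2 ≤ (switchState c (seg x N)).2 :=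
    fun k => (le_csSup hbdd ⟨k, rfl⟩).trans_eq hN.symm
  have hsettle : ∀ k, (switchState c (seg x N)).1.length ≤ k →
      switchState c (seg x k) = switchState c (seg x N) := fun k hk =>
    (le_total k N).elim (switchState_seg_eq_of_le hk) (switchState_seg_eq_of_ge hmax)
  refine Or.inl ⟨_, _, hsettle, fun k hk hck => ?_⟩
  obtain ⟨k, rfl⟩ := Nat.exists_eq_add_of_lt hk
  have := switchState_seg_succ c x ((switchState c (seg x N)).1.length + k)
  rw [hsettle (_ + k) (by omega), if_pos hck, hsettle (_ + k + 1) (by omega)] at this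
  simpa using congrArg Prod.snd this

end Switching

theorem good_nil {T' : Set (List ℕ)} {A : Set (ℕ → ℕ)} {Bs : ℕ → Set (ℕ → ℕ)}
    (hT' : IsGameTree T') (hBs : ∀ n, IsOpen (Bs n)) (hBA : ⋂ n, Bs n ⊆ A)
    (hnw : ¬ ∃ σ, WinStratI T' A σ) : Good T' A (⋂ n, Bs n) [] := by
  by_contra hng
  choose! τ hτ using fun r m (h : r ∈ T' ∧ ¬ Good T' A (⋂ n, Bs n) r) =>
    exists_winStratI_of_not_good hT' (Set.iInter_subset Bs m) (hBs m) h.1 h.2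
  set c := fun q m => Bad T' A (⋂ n, Bs n) (Bs m) q
  have hinv : ∀ q, (switchState c q).1 ∈ T' ∧ ¬ Good T' A (⋂ n, Bs n) (switchState c q).1 :=
    switchState_fst_induction (M := fun r => r ∈ T' ∧ ¬ Good T' A (⋂ n, Bs n) r)
      ⟨hT'.nil_mem, hng⟩ fun _ _ h => ⟨h.1, h.2.1⟩
  refine hnw ⟨fun q => τ (switchState c q).1 (switchState c q).2 q, fun q hq hev => ?_,
    fun x hx hcons => ?_⟩
  · exact restrict_subset _ _ ((hτ _ _ (hinv q)).1 q ⟨hq, Or.inr (switchState_fst_prefix c q)⟩ hev)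
  rcases switchState_seg_settles_or c x with ⟨r, m, hrm, hnot⟩ | hall
  · have hr := hinv (seg x r.length)
    have hxr := switchState_fst_prefix c (seg x r.length)
    rw [hrm r.length le_rfl] at hr hxr
    rcases (hτ r m hr).mem_of_consistent_from hT' hx (prefix_seg_iff.1 hxr).2
      (fun k hk hev => by simp only [hcons k hev, hrm k hk]) with hxA | ⟨k, hk, hbad⟩
    exacts [hxA, absurd hbad (hnot k hk)]
  · exact hBA (Set.mem_iInter.2 fun i => (hall i).elim fun k hk => hk.2.2 (mem_cyl_seg x k))

theorem covering_lemma_general (T : Set (List ℕ)) (hT : IsGameTree T)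
    (A B : Set (ℕ → ℕ)) (hBA : B ⊆ A) (hB : IsGδ B)
    (hI : ¬ ∃ σ, WinStratI T A σ) :
    ∃ S : Set (List ℕ), QuasiII T S ∧ body S ∩ B = ∅ ∧
      ¬ ∃ σ, WinStratI S (A ∩ body S) σ := by
  obtain ⟨Bs, hBs, rfl⟩ := hB.eq_iInter_nat
  have hT' := hT.quasiII_nonLosing hI
  obtain ⟨-, S, hS, hSB, hSA⟩ := good_nil hT'.1 hBs hBA (hT.not_exists_winStratI_nonLosing hI)
  rw [restrict_nil] at hS
  exact ⟨S, hT'.trans hS, hSB, hSA⟩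

/-- **Davis's covering lemma** (the paper's Lemma 31): if `B ⊆ A ⊆ [T]` with
`B` a `Gδ` set and player I has no winning strategy in `G(A; T)`, then there
is a quasi-strategy `S` for player II in `T` with `[S] ∩ B = ∅` such that
player I has no winning strategy in `G(A ∩ [S]; S)`. -/
theorem covering_lemma (T : Set (List ℕ)) (hT : IsGameTree T)
    (A B : Set (ℕ → ℕ)) (hA : A ⊆ body T) (hBA : B ⊆ A) (hB : IsGδ B)
    (hI : ¬ ∃ σ, WinStratI T A σ) :
    ∃ S : Set (List ℕ), QuasiII T S ∧ body S ∩ B = ∅ ∧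
      ¬ ∃ σ, WinStratI S (A ∩ body S) σ :=
  covering_lemma_general T hT A B hBA hB hI
end

section
/- Let T be a game tree, A ⊆ [T], and B ⊆ A with B = ⋂_{n∈ℕ} Dₙ where each Dₙ ⊆ ℕ^ℕ is open. Suppose player I has no winning strategy in G(A; T), and let T' be II's non-losing quasi-strategy for G(A;T). For a position p ∈ T' and n ∈ ℕ set Ẽₙᵖ = A ∪ {x ∈ [T'] : there is a finite initial segment q of x extending p with [T'_q] ⊆ Dₙ and q not good}. Suppose that for every p ∈ T' which is not good and every n ∈ ℕ, player I has a winning strategy in G(Ẽₙᵖ ∩ [T'_p]; T'_p). If the empty position ∅ is not good, then player I has a winning strategy in G(A ∩ [T']; T'). -/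
namespace StratSum

lemma seg_zero (x : ℕ → ℕ) : seg x 0 = [] := by simp [seg]

lemma seg_succ (x : ℕ → ℕ) (k : ℕ) : seg x (k+1) = seg x k ++ [x k] := by
  simp [seg, List.range_succ]

lemma seg_length (x : ℕ → ℕ) (k : ℕ) : (seg x k).length = k := by simp [seg]

lemma seg_prefix (x : ℕ → ℕ) {k m : ℕ} (h : k ≤ m) : seg x k <+: seg x m := by
  induction h with
  | refl => exact List.prefix_refl _
  | @step m' h ih =>
    exact ih.trans (by rw [seg_succ]; exact List.prefix_append _ _)

lemma seg_take (x : ℕ → ℕ) (k m : ℕ) : (seg x m).take k = seg x (min k m) := by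
  simp [seg, ← List.map_take, List.take_range]

lemma prefix_seg {x : ℕ → ℕ} {k : ℕ} {p : List ℕ} (h : p <+: seg x k) :
    p = seg x p.length := by
  have h1 : p.length ≤ k := by
    have := h.length_le; rwa [seg_length] at this
  have h2 : p = (seg x k).take p.length := List.prefix_iff_eq_take.1 h
  rw [seg_take, min_eq_left h1] at h2
  exact h2

open Classical in
noncomputable def stepSt (trig : List ℕ → ℕ → Prop) (r : List ℕ) (s : List ℕ × ℕ) :
    List ℕ × ℕ :=
  if trig r s.2 then
    if ∃ m, s.2 ≤ m ∧ ¬ trig r m then (r, sInf {m | s.2 ≤ m ∧ ¬ trig r m})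
    else (r, s.2)
  else s

lemma stepSt_cases (trig : List ℕ → ℕ → Prop) (r : List ℕ) (s : List ℕ × ℕ) :
    (¬ trig r s.2 ∧ stepSt trig r s = s) ∨
    (trig r s.2 ∧ ∃ m, s.2 < m ∧ ¬ trig r m ∧ (∀ j, s.2 ≤ j → j < m → trig r j) ∧
      stepSt trig r s = (r, m)) ∨
    ((∀ m, s.2 ≤ m → trig r m) ∧ stepSt trig r s = (r, s.2)) := by
  unfold stepSt
  split_ifs with h1 h2
  · right; left
    refine ⟨h1, sInf {m | s.2 ≤ m ∧ ¬ trig r m}, ?_, ?_, ?_, rfl⟩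
    · have hm := Nat.sInf_mem h2
      exact lt_of_le_of_ne hm.1 (fun heq => hm.2 (heq ▸ h1))
    · exact (Nat.sInf_mem h2).2
    · intro j hj hjm
      by_contra hc
      exact (Nat.notMem_of_lt_sInf hjm) ⟨hj, hc⟩
  · right; right
    push_neg at h2
    exact ⟨fun m hm => h2 m hm, rfl⟩
  · left; exact ⟨h1, rfl⟩

lemma stepSt_idx_le (trig : List ℕ → ℕ → Prop) (r : List ℕ) (s : List ℕ × ℕ) :
    s.2 ≤ (stepSt trig r s).2 := by
  rcases stepSt_cases trig r s with ⟨_, he⟩ | ⟨_, m, hlt, _, _, he⟩ | ⟨_, he⟩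
  · rw [he]
  · rw [he]; exact le_of_lt hlt
  · rw [he]

noncomputable def stGo (trig : List ℕ → ℕ → Prop) :
    List ℕ → List ℕ → (List ℕ × ℕ) → List ℕ × ℕ
  | _, [], s => s
  | acc, a :: rest, s => stGo trig (acc ++ [a]) rest (stepSt trig (acc ++ [a]) s)

noncomputable def st (trig : List ℕ → ℕ → Prop) (p : List ℕ) : List ℕ × ℕ :=
  stGo trig [] p (stepSt trig [] ([], 0))

lemma st_nil (trig : List ℕ → ℕ → Prop) : st trig [] = stepSt trig [] ([], 0) := rfl

lemma stGo_append (trig : List ℕ → ℕ → Prop) (l : List ℕ) :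
    ∀ (acc : List ℕ) (a : ℕ) (s : List ℕ × ℕ),
      stGo trig acc (l ++ [a]) s = stepSt trig (acc ++ l ++ [a]) (stGo trig acc l s) := by
  induction l with
  | nil => intro acc a s; simp [stGo]
  | cons b t ih =>
    intro acc a s
    show stGo trig (acc ++ [b]) (t ++ [a]) (stepSt trig (acc ++ [b]) s) = _
    rw [ih]
    simp [stGo, List.append_assoc]

lemma st_append (trig : List ℕ → ℕ → Prop) (p : List ℕ) (a : ℕ) :
    st trig (p ++ [a]) = stepSt trig (p ++ [a]) (st trig p) := by
  unfold st
  rw [stGo_append]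
  simp

lemma st_inv (trig : List ℕ → ℕ → Prop) (p : List ℕ) :
    (st trig p).1 <+: p ∧ ((st trig p).1 = [] ∨ ∃ m, trig (st trig p).1 m) := by
  induction p using List.reverseRecOn with
  | nil =>
    rcases stepSt_cases trig [] ([], 0) with ⟨_, he⟩ | ⟨_, m, _, _, _, he⟩ | ⟨_, he⟩ <;>
      rw [st_nil, he] <;> exact ⟨List.prefix_refl _, Or.inl rfl⟩
  | append_singleton p a ih =>
    rw [st_append]
    rcases stepSt_cases trig (p ++ [a]) (st trig p) with
      ⟨_, he⟩ | ⟨htrig, m, _, _, _, he⟩ | ⟨h, he⟩ <;> rw [he]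
    · exact ⟨ih.1.trans (List.prefix_append p [a]), ih.2⟩
    · exact ⟨List.prefix_refl _, Or.inr ⟨(st trig p).2, htrig⟩⟩
    · exact ⟨List.prefix_refl _, Or.inr ⟨(st trig p).2, h _ le_rfl⟩⟩

end StratSum

abbrev trigOf (T' : Set (List ℕ)) (A B : Set (ℕ → ℕ)) (D : ℕ → Set (ℕ → ℕ))
    (r : List ℕ) (n : ℕ) : Prop :=
  r ∈ T' ∧ ¬ Good T' A B r ∧ body (restrict T' r) ⊆ D n

/-- The strategy-summation argument (steps (9)–(10)) from the proof of the
paper's Lemma 31: if at every non-good position `p` of II's non-losing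
quasi-strategy `T'` player I can win `G(Ẽₙᵖ ∩ [T'_p]; T'_p)` for every `n`,
and the empty position is not good, then player I wins `G(A ∩ [T']; T')`. -/
theorem strategy_summation (T : Set (List ℕ)) (hT : IsGameTree T)
    (A B : Set (ℕ → ℕ)) (hA : A ⊆ body T) (hBA : B ⊆ A)
    (D : ℕ → Set (ℕ → ℕ)) (hD : ∀ n, IsOpen (D n)) (hB : B = ⋂ n, D n)
    (hI : ¬ ∃ σ, WinStratI T A σ)
    (T' : Set (List ℕ)) (hT' : T' = NonLosing T A)
    (Etil : List ℕ → ℕ → Set (ℕ → ℕ))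
    (hEtil : ∀ p n, Etil p n = A ∪ {x ∈ body T' | ∃ k : ℕ,
        p <+: seg x k ∧ body (restrict T' (seg x k)) ⊆ D n ∧
          ¬ Good T' A B (seg x k)})
    (hwin : ∀ p ∈ T', ¬ Good T' A B p → ∀ n : ℕ,
        ∃ σ, WinStratI (restrict T' p) (Etil p n ∩ body (restrict T' p)) σ)
    (hne : ¬ Good T' A B []) :
    ∃ σ, WinStratI T' (A ∩ body T') σ := by
  obtain ⟨hTne, hTpc, hTnt⟩ := hT
  have hnilT : ([] : List ℕ) ∈ T := by
    obtain ⟨p0, hp0⟩ := hTne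
    exact hTpc p0 hp0 [] (List.nil_prefix)
  have hrT : restrict T [] = T := by
    ext q; exact ⟨fun h => h.1, fun h => ⟨h, Or.inr (List.nil_prefix)⟩⟩
  have hAT : A ∩ body T = A := Set.inter_eq_self_of_subset_left hA
  have hnil : ([] : List ℕ) ∈ T' := by
    rw [hT']
    refine ⟨hnilT, ?_⟩
    intro q hq _
    rw [List.prefix_nil.1 hq, hrT, hAT]
    exact hI
  set TG := trigOf T' A B D with hTGdef
  have hσ : ∀ q n, ∃ s : List ℕ → ℕ, q ∈ T' → ¬ Good T' A B q →
      WinStratI (restrict T' q) (Etil q n ∩ body (restrict T' q)) s := by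
    intro q n
    by_cases h : q ∈ T' ∧ ¬ Good T' A B q
    · obtain ⟨s, hs⟩ := hwin q h.1 h.2 n
      exact ⟨s, fun _ _ => hs⟩
    · exact ⟨fun _ => 0, fun h1 h2 => absurd ⟨h1, h2⟩ h⟩
  choose σ hσ using hσ
  have hbase' : ∀ p : List ℕ,
      (StratSum.st TG p).1 ∈ T' ∧ ¬ Good T' A B (StratSum.st TG p).1 := by
    intro p
    rcases (StratSum.st_inv TG p).2 with h | ⟨m, hm⟩
    · rw [h]; exact ⟨hnil, hne⟩
    · exact ⟨hm.1, hm.2.1⟩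
  refine ⟨fun p => σ (StratSum.st TG p).1 (StratSum.st TG p).2 p, ?_, ?_⟩
  · -- legality
    intro p hp hev
    have hq := hbase' p
    have hw := hσ (StratSum.st TG p).1 (StratSum.st TG p).2 hq.1 hq.2
    have hmem : p ∈ restrict T' (StratSum.st TG p).1 :=
      ⟨hp, Or.inr (StratSum.st_inv TG p).1⟩
    exact (hw.1 p hmem hev).1
  · -- winning
    intro x hx hcons
    refine ⟨?_, hx⟩
    have hxT' : ∀ k, seg x k ∈ T' := hx
    have hxr : ∀ j, x ∈ body (restrict T' (seg x j)) := by
      intro j k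
      refine ⟨hxT' k, ?_⟩
      rcases le_total k j with h | h
      · exact Or.inl (StratSum.seg_prefix x h)
      · exact Or.inr (StratSum.seg_prefix x h)
    set S : ℕ → List ℕ × ℕ := fun k => StratSum.st TG (seg x k) with hSdef
    have hSapp : ∀ k, S k = StratSum.st TG (seg x k) := fun k => by rw [hSdef]
    have hS0 : S 0 = StratSum.stepSt TG [] ([], 0) := by
      rw [hSapp 0, StratSum.seg_zero]
      exact StratSum.st_nil TG
    have hSs : ∀ k, S (k+1) = StratSum.stepSt TG (seg x (k+1)) (S k) := by
      intro k
      rw [hSapp (k+1), hSapp k, StratSum.seg_succ, StratSum.st_append]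
    have hI2 : ∀ k m, m < (S k).2 → x ∈ D m := by
      intro k
      induction k with
      | zero =>
        intro m hm
        rw [hS0] at hm
        rcases StratSum.stepSt_cases TG [] ([], 0) with
          ⟨_, he⟩ | ⟨_, m', hlt, _, hall', he⟩ | ⟨_, he⟩ <;> rw [he] at hm
        · exact absurd hm (Nat.not_lt_zero m)
        · exact (hall' m (Nat.zero_le m) hm).2.2
            (by rw [← StratSum.seg_zero x]; exact hxr 0)
        · exact absurd hm (Nat.not_lt_zero m)
      | succ k ih =>
        intro m hm
        rw [hSs k] at hm
        rcases StratSum.stepSt_cases TG (seg x (k+1)) (S k) with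
          ⟨_, he⟩ | ⟨_, m', hlt, _, hall', he⟩ | ⟨_, he⟩ <;> rw [he] at hm
        · exact ih m hm
        · rcases lt_or_ge m (S k).2 with hms | hms
          · exact ih m hms
          · exact (hall' m hms hm).2.2 (hxr (k+1))
        · exact ih m hm
    have hbase : ∀ k, (S k).1 <+: seg x k := fun k => by
      rw [hSapp k]; exact (StratSum.st_inv TG (seg x k)).1
    by_cases hstab : ∃ K, ∀ k, K ≤ k → S k = S K
    · obtain ⟨K, hK⟩ := hstab
      obtain ⟨q, n, hSK⟩ : ∃ q n, S K = (q, n) := ⟨(S K).1, (S K).2, rfl⟩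
      have hqpre : q <+: seg x K := by have := hbase K; rwa [hSK] at this
      have hqlen : q.length ≤ K := by
        have := hqpre.length_le; rwa [StratSum.seg_length] at this
      have hqseg : q = seg x q.length := StratSum.prefix_seg hqpre
      have hstK : StratSum.st TG (seg x K) = (q, n) := by rw [← hSapp K]; exact hSK
      have hqgood : q ∈ T' ∧ ¬ Good T' A B q := by
        have := hbase' (seg x K)
        rwa [hstK] at this
      have hσw := hσ q n hqgood.1 hqgood.2
      have aux : ∀ j, q.length ≤ K - j → S (K - j) = (q, n) := by
        intro j
        induction j with
        | zero => intro _; simpa using hSK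
        | succ j ih =>
          intro hlen
          by_cases hjK : K ≤ j
          · have h0 : K - (j+1) = K - j := by omega
            rw [h0]; exact ih (by omega)
          · have hkk : K - (j+1) + 1 = K - j := by omega
            have hS1 : S (K - j) = (q, n) := ih (by omega)
            have hstep := hSs (K - (j+1))
            rw [hkk] at hstep
            rcases StratSum.stepSt_cases TG (seg x (K - j)) (S (K - (j+1))) with
              ⟨_, he⟩ | ⟨_, m', _, _, _, he⟩ | ⟨_, he⟩
            · rw [he] at hstep; rw [← hstep]; exact hS1
            · exfalso
              rw [he] at hstep; rw [hS1] at hstep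
              have hq : q = seg x (K - j) := congrArg Prod.fst hstep
              have hlq := congrArg List.length hq
              rw [StratSum.seg_length] at hlq
              omega
            · exfalso
              rw [he] at hstep; rw [hS1] at hstep
              have hq : q = seg x (K - j) := congrArg Prod.fst hstep
              have hlq := congrArg List.length hq
              rw [StratSum.seg_length] at hlq
              omega
      have hall : ∀ k, q.length ≤ k → S k = (q, n) := by
        intro k hk
        rcases le_or_gt k K with hkK | hkK
        · have h0 : k = K - (K - k) := by omega
          rw [h0]; exact aux (K - k) (by omega)
        · rw [hK k (le_of_lt hkK)]; exact hSK
      have hconsσ : ConsWithI (σ q n) x := by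
        intro k hk
        by_cases hkq : q.length ≤ k
        · have h1 : x k = σ (StratSum.st TG (seg x k)).1
              (StratSum.st TG (seg x k)).2 (seg x k) := hcons k hk
          rw [show StratSum.st TG (seg x k) = (q, n) from by
            rw [← hSapp k]; exact hall k hkq] at h1
          exact h1
        · push_neg at hkq
          have hmem : seg x k ∈ restrict T' q :=
            ⟨hxT' k, Or.inl (by rw [hqseg]; exact StratSum.seg_prefix x (le_of_lt hkq))⟩
          have heven : Even (seg x k).length := by rw [StratSum.seg_length]; exact hk
          have hleg := hσw.1 (seg x k) hmem heven
          have hlen : (seg x k ++ [σ q n (seg x k)]).length = k + 1 := by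
            simp [StratSum.seg_length]
          have heq : seg x k ++ [σ q n (seg x k)] = seg x (k+1) := by
            rcases hleg.2 with h | h
            · have h2 : seg x k ++ [σ q n (seg x k)] <+: seg x q.length := hqseg ▸ h
              have h3 := StratSum.prefix_seg h2
              rwa [hlen] at h3
            · have hl := h.length_le
              rw [hlen] at hl
              have h4 : q = seg x k ++ [σ q n (seg x k)] :=
                h.eq_of_length (by rw [hlen]; omega)
              rw [← h4, hqseg]
              congr 1
              omega
          rw [StratSum.seg_succ] at heq
          have h5 := List.append_cancel_left heq
          simp only [List.cons.injEq, and_true] at h5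
          exact h5.symm
      have hxq : x ∈ body (restrict T' q) := by rw [hqseg]; exact hxr q.length
      have hwinres := (hσw.2 x hxq hconsσ).1
      rw [hEtil] at hwinres
      simp only [Set.mem_union, Set.mem_setOf_eq] at hwinres
      rcases hwinres with hA' | ⟨hxb, k₀, hk₀pre, hk₀D, hk₀g⟩
      · exact hA'
      · have hk₀len : q.length ≤ k₀ := by
          have := hk₀pre.length_le; rwa [StratSum.seg_length] at this
        have hTGk : TG (seg x k₀) n := ⟨hxT' k₀, hk₀g, hk₀D⟩
        have hSk₀ : S k₀ = (q, n) := hall k₀ hk₀len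
        cases k₀ with
        | zero =>
          rw [hS0] at hSk₀
          rcases StratSum.stepSt_cases TG [] ([], 0) with
            ⟨hnt, he⟩ | ⟨_, m', _, hnt, _, he⟩ | ⟨halltrig, he⟩ <;> rw [he] at hSk₀
          · exfalso
            have hn : n = 0 := (congrArg Prod.snd hSk₀).symm
            rw [StratSum.seg_zero, hn] at hTGk
            exact hnt hTGk
          · exfalso
            have hn : n = m' := (congrArg Prod.snd hSk₀).symm
            rw [StratSum.seg_zero, hn] at hTGk
            exact hnt hTGk
          · refine hBA ?_
            rw [hB]
            exact Set.mem_iInter.2 fun m =>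
              (halltrig m (Nat.zero_le m)).2.2
                (by rw [← StratSum.seg_zero x]; exact hxr 0)
        | succ k =>
          have hstep := hSs k
          rcases StratSum.stepSt_cases TG (seg x (k+1)) (S k) with
            ⟨hnt, he⟩ | ⟨_, m', _, hnt, _, he⟩ | ⟨halltrig, he⟩
          · exfalso
            rw [he] at hstep
            have hk' : S k = (q, n) := by rw [← hstep]; exact hSk₀
            rw [hk'] at hnt
            exact hnt hTGk
          · exfalso
            rw [he] at hstep
            rw [hSk₀] at hstep
            have hn : n = m' := congrArg Prod.snd hstep
            rw [hn] at hTGk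
            exact hnt hTGk
          · rw [he] at hstep
            rw [hSk₀] at hstep
            have hn : n = (S k).2 := congrArg Prod.snd hstep
            refine hBA ?_
            rw [hB]
            refine Set.mem_iInter.2 fun m => ?_
            rcases lt_or_ge m n with hm | hm
            · exact hI2 (k+1) m (by rw [hSk₀]; exact hm)
            · exact (halltrig m (by omega)).2.2 (hxr (k+1))
    · -- unstable case
      push_neg at hstab
      by_cases hub : ∀ m, ∃ k, m < (S k).2
      · refine hBA ?_
        rw [hB]
        refine Set.mem_iInter.2 fun m => ?_
        obtain ⟨k, hk⟩ := hub m
        exact hI2 k m hk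
      · push_neg at hub
        obtain ⟨m₀, hm₀⟩ := hub
        have hmono : Monotone fun k => (S k).2 :=
          monotone_nat_of_le_succ fun k => by
            rw [hSs k]; exact StratSum.stepSt_idx_le TG (seg x (k+1)) (S k)
        have hVne : Set.Nonempty {n | ∃ k, (S k).2 = n} := ⟨(S 0).2, 0, rfl⟩
        have hVbd : BddAbove {n | ∃ k, (S k).2 = n} :=
          ⟨m₀, by rintro v ⟨k, rfl⟩; exact hm₀ k⟩
        obtain ⟨K₁, hK₁⟩ : ∃ k, (S k).2 = sSup {n | ∃ k, (S k).2 = n} :=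
          Nat.sSup_mem hVne hVbd
        have hidx : ∀ k, K₁ ≤ k → (S k).2 = (S K₁).2 := fun k hk =>
          le_antisymm (by rw [hK₁]; exact le_csSup hVbd ⟨k, rfl⟩) (hmono hk)
        obtain ⟨k₂, hk₂K, hk₂ne⟩ : ∃ k, K₁ ≤ k ∧ S (k+1) ≠ S k := by
          by_contra hc
          push_neg at hc
          have hcon : ∀ k, K₁ ≤ k → S k = S K₁ := by
            intro k hk
            induction k, hk using Nat.le_induction with
            | base => rfl
            | succ k hk ih => rw [hc k hk, ih]
          obtain ⟨k, hkK, hkne⟩ := hstab K₁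
          exact hkne (hcon k hkK)
        rcases StratSum.stepSt_cases TG (seg x (k₂+1)) (S k₂) with
          ⟨_, he⟩ | ⟨_, m', hlt, _, _, he⟩ | ⟨halltrig, he⟩
        · exact absurd (by rw [hSs k₂]; exact he) hk₂ne
        · exfalso
          have h1 : (S (k₂+1)).2 = m' := by rw [hSs k₂, he]
          have h2 := hidx (k₂+1) (by omega)
          have h3 := hidx k₂ hk₂K
          omega
        · refine hBA ?_
          rw [hB]
          refine Set.mem_iInter.2 fun m => ?_
          rcases lt_or_ge m (S k₂).2 with hm | hm
          · exact hI2 k₂ m hm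
          · exact (halltrig m hm).2.2 (hxr (k₂+1))
end
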